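/- arXiv:1904.07574 — 8 statements merged into one kernel-verified Lean document; each statement's English description precedes it below -/
import Mathlib

section
/- If a probability distribution P on ℝ satisfies P(σ) = P(-σ)·e^σ, then the mean of σ is nonnegative: ⟨σ⟩ ≥ 0. -/
open MeasureTheory Real

/-!
Symmetrising the integral over `σ ↦ -σ` gives `2 ⟨σ⟩ = ∫ σ (p σ - p (-σ))`, and the fluctuation
theorem turns the integrand into `σ (1 - e^{-σ}) p σ`, which is pointwise nonnegative because
`σ` and `1 - e^{-σ}` have the same sign.
-/

theorem integral_add_comp_neg_eq_two_nsmul {G E : Type*} [MeasurableSpace G] [AddGroup G]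
    [MeasurableNeg G] [NormedAddCommGroup E] [NormedSpace ℝ E] {μ : Measure G}
    [μ.IsNegInvariant] {f : G → E} (hf : Integrable f μ) :
    ∫ x, (f x + f (-x)) ∂μ = 2 • ∫ x, f x ∂μ := by
  rw [integral_add hf hf.comp_neg, integral_neg_eq_self, two_nsmul]

theorem mul_one_sub_exp_neg_nonneg (x : ℝ) : 0 ≤ x * (1 - exp (-x)) := by
  rcases le_total 0 x with hx | hx
  · exact mul_nonneg hx (sub_nonneg.2 (exp_le_one_iff.2 (neg_nonpos.2 hx)))
  · exact mul_nonneg_of_nonpos_of_nonpos hx (sub_nonpos.2 (one_le_exp_iff.2 (neg_nonneg.2 hx)))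

theorem mul_add_neg_mul_comp_neg_of_fluctuation {p : ℝ → ℝ}
    (hsym : ∀ σ, p σ = p (-σ) * exp σ) (σ : ℝ) :
    σ * p σ + -σ * p (-σ) = σ * (1 - exp (-σ)) * p σ := by
  have hneg : p (-σ) = p σ * exp (-σ) := by
    rw [hsym σ, mul_assoc, ← exp_add, add_neg_cancel, exp_zero, mul_one]
  rw [hneg]
  ring

theorem ft_mean_entropy_nonneg_general
    (p : ℝ → ℝ) (hp_nonneg : ∀ σ, 0 ≤ p σ)
    (hsym : ∀ σ, p σ = p (-σ) * Real.exp σ)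
    (hint : Integrable (fun σ => σ * p σ)) :
    0 ≤ ∫ σ, σ * p σ := by
  have hsymmetrised := integral_add_comp_neg_eq_two_nsmul hint
  simp only [mul_add_neg_mul_comp_neg_of_fluctuation hsym, two_nsmul] at hsymmetrised
  have hnonneg : 0 ≤ ∫ σ, σ * (1 - exp (-σ)) * p σ :=
    integral_nonneg fun σ => mul_nonneg (mul_one_sub_exp_neg_nonneg σ) (hp_nonneg σ)
  linarith

/-- If a probability density `p` on ℝ with finite first moment satisfies the detailed
fluctuation theorem `p σ = p (-σ) * exp σ`, then the mean of σ is nonnegative. -/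
theorem ft_mean_entropy_nonneg
    (p : ℝ → ℝ) (hp_nonneg : ∀ σ, 0 ≤ p σ)
    (hp_norm : ∫ σ, p σ = 1)
    (hsym : ∀ σ, p σ = p (-σ) * Real.exp σ)
    (hint : Integrable (fun σ => σ * p σ)) :
    0 ≤ ∫ σ, σ * p σ :=
  ft_mean_entropy_nonneg_general p hp_nonneg hsym hint
end

section
/- If a probability distribution P on ℝ satisfies P(σ) = P(-σ)·e^σ and ⟨σ⟩ = 0, then σ = 0 almost surely (equivalently Var(σ) = 0). -/
/-!
Substituting `σ ↦ -σ` in the mean and using `p (-σ) = p σ * exp (-σ)` gives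
`∫ σ * exp (-σ) * p σ = -∫ σ * p σ`. Hence `2 ⟨σ⟩ = ∫ σ * (1 - exp (-σ)) * p σ`, whose integrand
is nonnegative and vanishes only where `σ = 0` or `p σ = 0`; so a zero mean forces `σ * p σ = 0`
almost everywhere.
-/

open MeasureTheory Real

theorem mul_one_sub_exp_neg_pos {x : ℝ} (hx : x ≠ 0) : 0 < x * (1 - exp (-x)) := by
  rcases hx.lt_or_gt with hneg | hpos
  · exact mul_pos_of_neg_of_neg hneg (sub_neg.mpr (one_lt_exp_iff.mpr (neg_pos.mpr hneg)))
  · exact mul_pos hpos (sub_pos.mpr (exp_lt_one_iff.mpr (neg_neg_of_pos hpos)))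

section DetailedFluctuation

variable {p : ℝ → ℝ} (hsym : ∀ σ, p σ = p (-σ) * exp σ)
include hsym

theorem mul_exp_neg_mul_eq_neg_comp_neg (σ : ℝ) :
    σ * exp (-σ) * p σ = -((-σ) * p (-σ)) := by
  rw [hsym (-σ), neg_neg]
  ring

theorem integrable_mul_exp_neg_mul (hint : Integrable fun σ => σ * p σ) :
    Integrable fun σ => σ * exp (-σ) * p σ :=
  hint.comp_neg.neg.congr (ae_of_all _ fun σ => (mul_exp_neg_mul_eq_neg_comp_neg hsym σ).symm)

theorem integral_mul_exp_neg_mul : ∫ σ, σ * exp (-σ) * p σ = -∫ σ, σ * p σ := by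
  simp only [mul_exp_neg_mul_eq_neg_comp_neg hsym, integral_neg,
    integral_neg_eq_self (fun σ => σ * p σ)]

theorem integrable_mul_one_sub_exp_neg_mul (hint : Integrable fun σ => σ * p σ) :
    Integrable fun σ => σ * (1 - exp (-σ)) * p σ :=
  (hint.sub (integrable_mul_exp_neg_mul hsym hint)).congr
    (ae_of_all _ fun σ => by simp only [Pi.sub_apply]; ring)

theorem integral_mul_one_sub_exp_neg_mul (hint : Integrable fun σ => σ * p σ) :
    ∫ σ, σ * (1 - exp (-σ)) * p σ = 2 * ∫ σ, σ * p σ := by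
  simp only [mul_sub, sub_mul, mul_one]
  rw [integral_sub hint (integrable_mul_exp_neg_mul hsym hint), integral_mul_exp_neg_mul hsym]
  ring

end DetailedFluctuation

theorem ft_zero_mean_implies_zero_variance_general
    (p : ℝ → ℝ) (hp_nonneg : ∀ σ, 0 ≤ p σ)
    (hsym : ∀ σ, p σ = p (-σ) * Real.exp σ)
    (hint1 : Integrable (fun σ => σ * p σ))
    (hmean : ∫ σ, σ * p σ = 0) :
    (∀ᵐ σ, σ * p σ = 0) ∧ ∫ σ, σ ^ 2 * p σ = 0 := by
  have hzero : (fun σ => σ * (1 - exp (-σ)) * p σ) =ᵐ[volume] 0 :=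
    (integral_eq_zero_iff_of_nonneg
      (fun σ => mul_nonneg (mul_one_sub_exp_neg_nonneg σ) (hp_nonneg σ))
      (integrable_mul_one_sub_exp_neg_mul hsym hint1)).mp
      (by rw [integral_mul_one_sub_exp_neg_mul hsym hint1, hmean, mul_zero])
  have hae : ∀ᵐ σ, σ * p σ = 0 := by
    filter_upwards [hzero] with σ hσ
    rcases eq_or_ne σ 0 with rfl | hσ0
    · exact zero_mul _
    · have hp0 : p σ = 0 :=
        (mul_eq_zero.mp hσ).resolve_left (mul_one_sub_exp_neg_pos hσ0).ne'
      rw [hp0, mul_zero]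
  refine ⟨hae, ?_⟩
  rw [integral_eq_zero_of_ae]
  filter_upwards [hae] with σ hσ
  rw [pow_two, mul_assoc, hσ, mul_zero, Pi.zero_apply]

/-- If a probability density `p` on ℝ satisfies `p σ = p (-σ) * exp σ` and the mean of σ
is zero, then σ = 0 almost surely, equivalently the variance of σ vanishes. -/
theorem ft_zero_mean_implies_zero_variance
    (p : ℝ → ℝ) (hp_nonneg : ∀ σ, 0 ≤ p σ)
    (hp_norm : ∫ σ, p σ = 1)
    (hsym : ∀ σ, p σ = p (-σ) * Real.exp σ)
    (hint1 : Integrable (fun σ => σ * p σ))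
    (hint2 : Integrable (fun σ => σ ^ 2 * p σ))
    (hmean : ∫ σ, σ * p σ = 0) :
    (∀ᵐ σ, σ * p σ = 0) ∧ ∫ σ, σ ^ 2 * p σ = 0 :=
  ft_zero_mean_implies_zero_variance_general p hp_nonneg hsym hint1 hmean
end

section
/- Let g be the inverse of x ↦ x·tanh(x) on [0,∞) and f(x) = csch²(g(x/2)). Then f(x) ≤ 2/x for all x > 0, i.e., the generalized TUR bound is always looser than the original bound 2/⟨Σ⟩. -/
open Real

/-! With `t = g (x/2)` we have `x = 2 t tanh t`, so the claim is `t tanh t ≤ sinh² t`, i.e.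
`t ≤ sinh t cosh t`, which follows from `t ≤ sinh t` and `1 ≤ cosh t`. -/

theorem mul_tanh_le_sinh_sq (t : ℝ) : t * tanh t ≤ sinh t ^ 2 := by
  wlog ht : 0 ≤ t generalizing t
  · simpa [tanh_neg] using this (-t) (by linarith)
  have hcosh : 0 < cosh t := cosh_pos t
  have hsinh : 0 ≤ sinh t := sinh_nonneg_iff.mpr ht
  rw [tanh_eq_sinh_div_cosh, mul_div_assoc', div_le_iff₀ hcosh]
  calc t * sinh t ≤ sinh t * sinh t := by gcongr; exact self_le_sinh_iff.mpr ht
    _ ≤ sinh t ^ 2 * cosh t := by nlinarith [one_le_cosh t]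

/-- Let `g` be the inverse of `x ↦ x * tanh x` on `[0, ∞)` and
`f x = csch² (g (x/2))`.  Then `f x ≤ 2/x` for all `x > 0`: the generalized TUR
bound is always looser than the original bound `2/⟨Σ⟩`. -/
theorem tur_f_le_two_div_x
    (g : ℝ → ℝ)
    (hg : ∀ x ∈ Set.Ici (0 : ℝ), g x ∈ Set.Ici (0 : ℝ) ∧ g x * Real.tanh (g x) = x)
    (f : ℝ → ℝ) (hf : ∀ x, f x = (1 / Real.sinh (g (x / 2))) ^ 2) :
    ∀ x > (0 : ℝ), f x ≤ 2 / x := by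
  intro x hx
  obtain ⟨-, hgx⟩ := hg (x / 2) (Set.mem_Ici.mpr (by positivity))
  have hpos : 0 < g (x / 2) * tanh (g (x / 2)) := by rw [hgx]; positivity
  calc f x = 1 / sinh (g (x / 2)) ^ 2 := by rw [hf, one_div_pow]
    _ ≤ 1 / (g (x / 2) * tanh (g (x / 2))) :=
      one_div_le_one_div_of_le hpos (mul_tanh_le_sinh_sq _)
    _ = 2 / x := by rw [hgx]; field_simp
end

section
/- Let g be the inverse of x ↦ x·tanh(x) on [0,∞) and f(x) = csch²(g(x/2)). Then f(x) ≥ 2/(e^x - 1) for all x > 0, i.e., the saturable TUR bound is tighter than the bound 2/(e^⟨Σ⟩ - 1). -/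
/-!
Put `t = g (x / 2)`, so that `x = 2 t tanh t` and `2 sinh² t = cosh 2t - 1`; the claim becomes
`log cosh 2t ≤ 2 t tanh t`. Both sides vanish at `t = 0`, and since `(log cosh)' = tanh` the
comparison of derivatives is `tanh 2t ≤ tanh t + t tanh' t`: the tangent-line inequality at `t`
for `tanh`, which is concave on `[0, ∞)`.
-/

open Real Set

namespace Real

theorem hasDerivAt_tanh (x : ℝ) : HasDerivAt tanh (1 / cosh x ^ 2) x := by
  have h := (hasDerivAt_sinh x).div (hasDerivAt_cosh x) (cosh_pos x).ne'
  rw [show sinh / cosh = tanh from funext fun y => (tanh_eq_sinh_div_cosh y).symm] at h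
  refine h.congr_deriv ?_
  rw [← cosh_sq_sub_sinh_sq x]
  ring

theorem tanh_le_self {x : ℝ} (hx : 0 ≤ x) : tanh x ≤ x := by
  have hmono : Monotone fun u => u - tanh u :=
    monotone_of_hasDerivAt_nonneg (fun u => (hasDerivAt_id u).sub (hasDerivAt_tanh u))
      fun u => sub_nonneg.mpr <| div_le_one_of_le₀ (one_le_pow₀ (one_le_cosh u)) (by positivity)
  simpa using hmono hx

theorem tanh_two_mul_le {x : ℝ} (hx : 0 ≤ x) : tanh (2 * x) ≤ tanh x + x / cosh x ^ 2 := by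
  have hc : 1 ≤ cosh x := one_le_cosh x
  have hs : 0 ≤ sinh x := sinh_nonneg_iff.mpr hx
  have hsx : sinh x / cosh x ≤ x := tanh_eq_sinh_div_cosh x ▸ tanh_le_self hx
  rw [tanh_eq_sinh_div_cosh, tanh_eq_sinh_div_cosh, sinh_two_mul, cosh_two_mul]
  calc 2 * sinh x * cosh x / (cosh x ^ 2 + sinh x ^ 2)
      ≤ sinh x / cosh x + sinh x / cosh x / cosh x ^ 2 := by
        rw [div_le_iff₀ (by positivity)]
        field_simp
        rw [sinh_sq]
        nlinarith [mul_nonneg hs (sub_nonneg.mpr (one_le_pow₀ (n := 2) hc))]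
    _ ≤ sinh x / cosh x + x / cosh x ^ 2 := by gcongr

theorem log_cosh_two_mul_le {t : ℝ} (ht : 0 ≤ t) : log (cosh (2 * t)) ≤ 2 * (t * tanh t) := by
  let F u := 2 * (u * tanh u) - log (cosh (2 * u))
  have hF : ∀ u, HasDerivAt F (2 * (tanh u + u / cosh u ^ 2) - 2 * tanh (2 * u)) u := by
    intro u
    have hlog := ((hasDerivAt_cosh (2 * u)).comp u ((hasDerivAt_id u).const_mul 2)).log
      (cosh_pos (2 * u)).ne'
    refine ((((hasDerivAt_id u).mul (hasDerivAt_tanh u)).const_mul 2).sub hlog).congr_deriv ?_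
    simp only [id, Function.comp_apply]
    rw [tanh_eq_sinh_div_cosh (2 * u)]
    ring
  have hmono : MonotoneOn F (Ici 0) :=
    monotoneOn_of_hasDerivWithinAt_nonneg (convex_Ici 0)
      (fun u _ => (hF u).continuousAt.continuousWithinAt) (fun u _ => (hF u).hasDerivWithinAt)
      fun u hu => by
        rw [interior_Ici] at hu
        linarith [tanh_two_mul_le (le_of_lt hu)]
  have := hmono self_mem_Ici ht ht
  simp only [F, mul_zero, tanh_zero, cosh_zero, log_one, sub_zero] at this
  linarith

theorem two_mul_sinh_sq_le_exp_sub_one {t : ℝ} (ht : 0 ≤ t) :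
    2 * sinh t ^ 2 ≤ exp (2 * (t * tanh t)) - 1 := by
  have h := exp_le_exp.mpr (log_cosh_two_mul_le ht)
  rw [exp_log (cosh_pos _), cosh_two_mul, cosh_sq] at h
  linarith

end Real

/-- Let `g` be the inverse of `x ↦ x * tanh x` on `[0, ∞)` and
`f x = csch² (g (x/2))`.  Then `f x ≥ 2/(e^x - 1)` for all `x > 0`: the saturable
TUR bound is tighter than the bound `2/(e^⟨Σ⟩ - 1)`. -/
theorem tur_f_ge_exchange_bound
    (g : ℝ → ℝ)
    (hg : ∀ x ∈ Set.Ici (0 : ℝ), g x ∈ Set.Ici (0 : ℝ) ∧ g x * Real.tanh (g x) = x)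
    (f : ℝ → ℝ) (hf : ∀ x, f x = (1 / Real.sinh (g (x / 2))) ^ 2) :
    ∀ x > (0 : ℝ), f x ≥ 2 / (Real.exp x - 1) := by
  intro x hx
  obtain ⟨ht, hxt⟩ := hg (x / 2) (mem_Ici.mpr (by positivity))
  set t := g (x / 2)
  have htpos : 0 < t := lt_of_le_of_ne ht fun h => by
    rw [← h, zero_mul] at hxt
    linarith
  have hbound : 2 * sinh t ^ 2 ≤ exp x - 1 := by
    simpa [hxt, mul_div_cancel₀] using two_mul_sinh_sq_le_exp_sub_one htpos.le
  have hsinh : 0 < sinh t := sinh_pos_iff.mpr htpos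
  have hexp : 0 < exp x - 1 := by linarith [add_one_lt_exp hx.ne']
  rw [hf, ge_iff_le, div_pow, one_pow, div_le_div_iff₀ hexp (by positivity)]
  linarith
end

section
/- Let P be the two-point minimal distribution with support {(a,b),(-a,-b)}, weights e^{±a/2}/(2cosh(a/2)), where a = 2g(⟨x⟩/2) and b = a⟨y⟩/⟨x⟩. Then Var(y) = ⟨y⟩²·f(⟨x⟩), where f(x) = csch²(g(x/2)) and g is the inverse of t ↦ t·tanh(t). -/
open Real

/-! Since the weights `e^{±s}/(2 cosh s)` sum to one and differ by `tanh s`, a symmetric two-point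
law with values `±b` has variance `b² (1 - tanh² s) = b² / cosh² s`. With `s = t = g(⟨x⟩/2)` the
defining relation `t tanh t = ⟨x⟩/2` gives `b = ⟨y⟩ / tanh t`, and `tanh t · cosh t = sinh t`
turns the variance into `⟨y⟩² / sinh² t`. -/

theorem two_point_variance_of_add_eq_one (p q b : ℝ) (hpq : p + q = 1) :
    (p * b ^ 2 + q * (-b) ^ 2) - (p * b + q * (-b)) ^ 2 = b ^ 2 * (1 - (p - q) ^ 2) := by
  linear_combination b ^ 2 * hpq

theorem exp_div_two_cosh_add_exp_neg_div_two_cosh (s : ℝ) :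
    exp s / (2 * cosh s) + exp (-s) / (2 * cosh s) = 1 := by
  rw [← add_div, div_eq_one_iff_eq (by positivity), cosh_eq]
  ring

theorem exp_div_two_cosh_sub_exp_neg_div_two_cosh (s : ℝ) :
    exp s / (2 * cosh s) - exp (-s) / (2 * cosh s) = tanh s := by
  rw [← sub_div, tanh_eq_sinh_div_cosh, sinh_eq, div_right_comm, mul_comm, div_div]

theorem one_sub_tanh_sq (s : ℝ) : 1 - tanh s ^ 2 = 1 / cosh s ^ 2 := by
  have hcosh : cosh s ≠ 0 := (cosh_pos s).ne'
  rw [tanh_eq_sinh_div_cosh]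
  field_simp
  linear_combination cosh_sq_sub_sinh_sq s

theorem tanh_mul_cosh (s : ℝ) : tanh s * cosh s = sinh s := by
  rw [tanh_eq_sinh_div_cosh, div_mul_cancel₀ _ (cosh_pos s).ne']

/-- For the two-point minimal distribution with support `{(a,b), (-a,-b)}` and weights
`exp(±a/2)/(2 cosh(a/2))`, where `a = 2 g(⟨x⟩/2)` and `b = a ⟨y⟩/⟨x⟩` (`g` being the
inverse of `t ↦ t tanh t`), the variance of `y` equals `⟨y⟩² f(⟨x⟩)` with
`f x = csch²(g (x/2))`. -/
theorem minimal_distribution_saturates_TUR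
    (g : ℝ → ℝ)
    (hg : ∀ x ∈ Set.Ici (0 : ℝ), g x ∈ Set.Ici (0 : ℝ) ∧ g x * Real.tanh (g x) = x)
    (qx qy : ℝ) (hqx : 0 < qx)
    (a b : ℝ) (ha : a = 2 * g (qx / 2)) (hb : b = a * qy / qx)
    (pPlus pMinus : ℝ)
    (hpPlus : pPlus = Real.exp (a / 2) / (2 * Real.cosh (a / 2)))
    (hpMinus : pMinus = Real.exp (-(a / 2)) / (2 * Real.cosh (a / 2))) :
    (pPlus * b ^ 2 + pMinus * (-b) ^ 2) - (pPlus * b + pMinus * (-b)) ^ 2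
      = qy ^ 2 * (1 / Real.sinh (g (qx / 2))) ^ 2 := by
  obtain ⟨-, htt⟩ := hg (qx / 2) (Set.mem_Ici.mpr (by positivity))
  set t := g (qx / 2)
  obtain ⟨ht, htanh⟩ := mul_ne_zero_iff.mp (htt ▸ (by positivity : qx / 2 ≠ 0))
  have hb' : b = qy / tanh t := by
    rw [hb, ha, show qx = 2 * (t * tanh t) by linarith]
    field_simp
  have ha' : a / 2 = t := by rw [ha]; ring
  have hsum : pPlus + pMinus = 1 := by
    rw [hpPlus, hpMinus, ha', exp_div_two_cosh_add_exp_neg_div_two_cosh]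
  have hdiff : pPlus - pMinus = tanh t := by
    rw [hpPlus, hpMinus, ha', exp_div_two_cosh_sub_exp_neg_div_two_cosh]
  rw [two_point_variance_of_add_eq_one _ _ _ hsum, hdiff, one_sub_tanh_sq, hb', ← tanh_mul_cosh]
  ring
end

section
/- The function x ↦ √x · arctanh(√x) is convex on the interval (0,1). -/
/-!
On `[0, 1)` the Taylor series of `arctanh` gives `√x * arctanh √x = ∑ x ^ (k + 1) / (2k + 1)`,
a series of convex powers with nonnegative coefficients, and convexity passes to pointwise sums.
-/

open Real

/-- The inverse hyperbolic tangent, `arctanh x = (1/2) log ((1+x)/(1-x))`. -/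
noncomputable def arctanh (x : ℝ) : ℝ := (1 / 2) * Real.log ((1 + x) / (1 - x))

theorem ConvexOn.of_hasSum {𝕜 E β ι : Type*} [Semiring 𝕜] [PartialOrder 𝕜] [AddCommMonoid E]
    [SMul 𝕜 E] [AddCommMonoid β] [PartialOrder β] [IsOrderedAddMonoid β] [TopologicalSpace β]
    [OrderClosedTopology β] [DistribSMul 𝕜 β] [ContinuousConstSMul 𝕜 β] [ContinuousAdd β]
    {s : Set E} {f : ι → E → β} {F : E → β} (hs : Convex 𝕜 s) (hf : ∀ i, ConvexOn 𝕜 s (f i))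
    (hF : ∀ x ∈ s, HasSum (fun i => f i x) (F x)) : ConvexOn 𝕜 s F :=
  ⟨hs, fun x hx y hy a b ha hb hab =>
    hasSum_le (fun i => (hf i).2 hx hy ha hb hab) (hF _ (hs hx hy ha hb hab))
      (((hF x hx).const_smul a).add ((hF y hy).const_smul b))⟩

theorem hasSum_arctanh {x : ℝ} (hx : |x| < 1) :
    HasSum (fun k : ℕ => 1 / (2 * k + 1) * x ^ (2 * k + 1)) (arctanh x) := by
  have hx₁ : 0 < 1 + x := by linarith [neg_abs_le x]
  have hx₂ : 0 < 1 - x := by linarith [le_abs_self x]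
  rw [arctanh, log_div hx₁.ne' hx₂.ne']
  have hterm : (fun k : ℕ => 1 / (2 * k + 1) * x ^ (2 * k + 1)) =
      fun k : ℕ => 1 / 2 * (2 * (1 / (2 * k + 1)) * x ^ (2 * k + 1)) := by
    ext k
    ring
  rw [hterm]
  exact (hasSum_log_sub_log_of_abs_lt_one hx).mul_left (1 / 2)

theorem hasSum_sqrt_mul_arctanh_sqrt {x : ℝ} (hx₀ : 0 ≤ x) (hx₁ : x < 1) :
    HasSum (fun k : ℕ => 1 / (2 * k + 1) * x ^ (k + 1)) (√x * arctanh √x) := by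
  have hsqrt : |√x| < 1 := by
    rw [abs_of_nonneg (sqrt_nonneg x), sqrt_lt' one_pos, one_pow]
    exact hx₁
  have hterm : (fun k : ℕ => 1 / (2 * k + 1) * x ^ (k + 1)) =
      fun k : ℕ => √x * (1 / (2 * k + 1) * √x ^ (2 * k + 1)) := by
    ext k
    rw [mul_left_comm, ← pow_succ', show 2 * k + 1 + 1 = 2 * (k + 1) by ring, pow_mul, sq_sqrt hx₀]
  rw [hterm]
  exact (hasSum_arctanh hsqrt).mul_left √x

/-- The function `x ↦ √x * arctanh (√x)` is convex on `(0, 1)`. -/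
theorem convexOn_sqrt_mul_arctanh_sqrt :
    ConvexOn ℝ (Set.Ioo 0 1) (fun x : ℝ => Real.sqrt x * arctanh (Real.sqrt x)) :=
  ConvexOn.of_hasSum (convex_Ioo 0 1)
    (fun k => ((convexOn_pow (k + 1)).smul (by positivity)).subset
      (Set.Ioo_subset_Ioi_self.trans Set.Ioi_subset_Ici_self) (convex_Ioo 0 1))
    fun _ hx => hasSum_sqrt_mul_arctanh_sqrt hx.1.le hx.2
end

section
/- For fixed 0 ≤ x_a, the map x_b ↦ (x_b·tanh(x_b/2) - x_a·tanh(x_a/2))/(x_b² - x_a²) is strictly decreasing in x_b for x_b > x_a ≥ 0. -/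
/-!
Writing `g t = √t * tanh (√t / 2)`, we have `x * tanh (x / 2) = g (x ^ 2)` for `x ≥ 0`, so the
quotient is the slope of the secant of `g` between `xa ^ 2` and `xb ^ 2`. It decreases in `xb`
because `g` is strictly concave on `[0, ∞)`: at `v = √t / 2` one computes
`4 g'(t) = tanh v / v + 1 / cosh v ^ 2`, a sum of two strictly decreasing functions of `v > 0`.
-/

open Real Set

namespace Real

theorem continuous_tanh : Continuous tanh :=
  continuous_iff_continuousAt.2 fun x => (hasDerivAt_tanh x).continuousAt

theorem strictAntiOn_tanh_div_self : StrictAntiOn (fun x => tanh x / x) (Ioi 0) := by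
  refine strictAntiOn_of_deriv_neg (convex_Ioi 0)
    (continuous_tanh.continuousOn.div continuousOn_id fun x hx => ne_of_gt hx) fun x hx => ?_
  rw [interior_Ioi] at hx
  have hx : 0 < x := hx
  have hderiv : HasDerivAt (fun x => tanh x / x) _ x :=
    (hasDerivAt_tanh x).div (hasDerivAt_id' x) hx.ne'
  rw [hderiv.deriv]
  refine div_neg_of_neg_of_pos ?_ (by positivity)
  -- `x < sinh x ≤ sinh x * cosh x = tanh x * cosh x ^ 2`
  have hcosh := cosh_pos x
  have hx_lt : x < tanh x * cosh x ^ 2 := by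
    rw [tanh_eq_sinh_div_cosh, div_mul_eq_mul_div, sq, ← mul_assoc,
      mul_div_cancel_right₀ _ hcosh.ne']
    nlinarith [self_lt_sinh_iff.2 hx, one_le_cosh x]
  rw [div_mul_eq_mul_div, one_mul, mul_one, sub_neg, div_lt_iff₀ (by positivity)]
  exact hx_lt

theorem strictAntiOn_one_div_cosh_sq : StrictAntiOn (fun x => 1 / cosh x ^ 2) (Ioi 0) := by
  intro x hx y hy hxy
  have hcosh : cosh x < cosh y := cosh_lt_cosh.2 <| by
    rwa [abs_of_pos hx, abs_of_pos (lt_trans hx hxy)]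
  have := cosh_pos x
  exact one_div_lt_one_div_of_lt (by positivity) (by gcongr)

end Real

noncomputable def sqrtMulTanhHalfSqrt (t : ℝ) : ℝ := √t * tanh (√t / 2)

theorem sqrtMulTanhHalfSqrt_sq {x : ℝ} (hx : 0 ≤ x) :
    sqrtMulTanhHalfSqrt (x ^ 2) = x * tanh (x / 2) := by
  rw [sqrtMulTanhHalfSqrt, sqrt_sq hx]

theorem hasDerivAt_sqrtMulTanhHalfSqrt {t : ℝ} (ht : 0 < t) :
    HasDerivAt sqrtMulTanhHalfSqrt
      ((tanh (√t / 2) / (√t / 2) + 1 / cosh (√t / 2) ^ 2) / 4) t := by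
  have hsqrt := hasDerivAt_sqrt ht.ne'
  have h : HasDerivAt (fun t => √t * tanh (√t / 2)) _ t :=
    hsqrt.mul ((hasDerivAt_tanh (√t / 2)).comp (h₂ := tanh) t (hsqrt.div_const 2))
  refine h.congr_deriv ?_
  have := sqrt_pos.2 ht
  field_simp
  ring

theorem strictAntiOn_deriv_sqrtMulTanhHalfSqrt :
    StrictAntiOn (deriv sqrtMulTanhHalfSqrt) (Ioi 0) := by
  intro s hs t ht hst
  have hs' : 0 < √s / 2 := by have := sqrt_pos.2 hs; positivity
  have hst' : √s / 2 < √t / 2 :=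
    div_lt_div_of_pos_right (sqrt_lt_sqrt (le_of_lt hs) hst) two_pos
  have ht' : 0 < √t / 2 := lt_trans hs' hst'
  rw [(hasDerivAt_sqrtMulTanhHalfSqrt hs).deriv,
    (hasDerivAt_sqrtMulTanhHalfSqrt (lt_trans hs hst)).deriv]
  gcongr ?_ / 4
  exact add_lt_add (strictAntiOn_tanh_div_self hs' ht' hst')
    (strictAntiOn_one_div_cosh_sq hs' ht' hst')

theorem strictConcaveOn_sqrtMulTanhHalfSqrt :
    StrictConcaveOn ℝ (Ici 0) sqrtMulTanhHalfSqrt := by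
  refine StrictAntiOn.strictConcaveOn_of_deriv (convex_Ici 0) ?_ ?_
  · exact (continuous_sqrt.mul (continuous_tanh.comp (continuous_sqrt.div_const 2))).continuousOn
  · rw [interior_Ici]
    exact strictAntiOn_deriv_sqrtMulTanhHalfSqrt

/-- For fixed `x_a ≥ 0`, the map
`x_b ↦ (x_b tanh(x_b/2) - x_a tanh(x_a/2)) / (x_b² - x_a²)`
is strictly decreasing in `x_b` on `(x_a, ∞)`. -/
theorem difference_quotient_strictAntiOn (xa : ℝ) (hxa : 0 ≤ xa) :
    StrictAntiOn
      (fun xb : ℝ =>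
        (xb * Real.tanh (xb / 2) - xa * Real.tanh (xa / 2)) / (xb ^ 2 - xa ^ 2))
      (Set.Ioi xa) := by
  intro b hb c hc hbc
  have hb₀ : 0 ≤ b := hxa.trans (le_of_lt hb)
  have hc₀ : 0 ≤ c := hxa.trans (le_of_lt hc)
  have key := strictConcaveOn_sqrtMulTanhHalfSqrt.secant_strict_mono
    (sq_nonneg xa) (sq_nonneg b) (sq_nonneg c)
    (pow_lt_pow_left₀ hb hxa two_ne_zero).ne' (pow_lt_pow_left₀ hc hxa two_ne_zero).ne'
    (pow_lt_pow_left₀ hbc hb₀ two_ne_zero)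
  rwa [sqrtMulTanhHalfSqrt_sq hxa, sqrtMulTanhHalfSqrt_sq hb₀, sqrtMulTanhHalfSqrt_sq hc₀] at key
end

section
/- For fixed x_a > 0, the map x_b ↦ (x_b·tanh(x_b) - x_a·tanh(x_a))/(tanh²(x_b) - tanh²(x_a)) is strictly increasing in x_b for x_b > x_a. -/
open Real Set

/-!
Put `w = tanh² x`. For `x ≥ 0` we have `x * tanh x = √w * artanh √w`, and `tanh²` is strictly
increasing on `[0, ∞)`, so the quotient in question is the slope of `G w = √w * artanh √w`
between `tanh² x_a` and `tanh² x_b`. It therefore suffices that `G` is strictly convex on `[0, 1)`,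
which holds because `2 G' w = artanh √w / √w + (1 - w)⁻¹` is a sum of two increasing functions,
the first one being a secant slope of the convex function `artanh` from `0`.
-/

namespace Real

theorem hasDerivAt_artanh {t : ℝ} (ht : t ∈ Ioo (-1) 1) :
    HasDerivAt artanh (1 - t ^ 2)⁻¹ t := by
  have hp : 0 < 1 + t := by linarith [ht.1]
  have hm : 0 < 1 - t := by linarith [ht.2]
  have hne : 1 - t ^ 2 ≠ 0 := by nlinarith
  have hlog : HasDerivAt (fun x => (log (1 + x) - log (1 - x)) / 2) (1 - t ^ 2)⁻¹ t := by
    refine ((((hasDerivAt_id' t).const_add 1).log hp.ne').sub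
      (((hasDerivAt_id' t).const_sub 1).log hm.ne')).div_const 2 |>.congr_deriv ?_
    field_simp
    ring
  refine hlog.congr_of_eventuallyEq ?_
  filter_upwards [Ioo_mem_nhds ht.1 ht.2] with x hx
  have hxp : 0 < 1 + x := by linarith [hx.1]
  have hxm : 0 < 1 - x := by linarith [hx.2]
  rw [artanh_eq_half_log (Ioo_subset_Icc_self hx), log_div hxp.ne' hxm.ne']
  ring

theorem strictConvexOn_artanh : StrictConvexOn ℝ (Ico 0 1) artanh := by
  refine StrictMonoOn.strictConvexOn_of_deriv (convex_Ico 0 1) (fun t ht => ?_) ?_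
  · exact (hasDerivAt_artanh ⟨by linarith [ht.1], ht.2⟩).continuousAt.continuousWithinAt
  · rw [interior_Ico]
    intro u hu v hv huv
    rw [(hasDerivAt_artanh ⟨by linarith [hu.1], hu.2⟩).deriv,
      (hasDerivAt_artanh ⟨by linarith [hv.1], hv.2⟩).deriv]
    have : v ^ 2 < 1 := by nlinarith [hv.1, hv.2]
    gcongr
    exact hu.1.le

theorem strictMonoOn_artanh_div_self : StrictMonoOn (fun t => artanh t / t) (Ioo 0 1) := by
  intro s hs t ht hst
  simpa [artanh_zero] using strictConvexOn_artanh.secant_strict_mono ⟨le_rfl, one_pos⟩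
    (Ioo_subset_Ico_self hs) (Ioo_subset_Ico_self ht) hs.1.ne' ht.1.ne' hst

theorem tanh_strictMono : StrictMono tanh := fun x y hxy => by
  by_contra! h
  have := artanh_le_artanh (neg_one_lt_tanh y) (tanh_lt_one x) h
  rw [artanh_tanh, artanh_tanh] at this
  linarith

theorem tanh_nonneg {x : ℝ} (hx : 0 ≤ x) : 0 ≤ tanh x := by
  simpa using tanh_strictMono.monotone hx

end Real

theorem hasDerivAt_sqrt_mul_artanh_sqrt {w : ℝ} (hw : w ∈ Ioo 0 1) :
    HasDerivAt (fun w => √w * artanh √w) ((artanh √w / √w + (1 - w)⁻¹) / 2) w := by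
  have hs : 0 < √w := sqrt_pos.2 hw.1
  have hs_lt_one : √w < 1 := (sqrt_lt' one_pos).2 (by simpa using hw.2)
  have hsq : √w ^ 2 = w := sq_sqrt hw.1.le
  refine ((hasDerivAt_sqrt hw.1.ne').mul ((hasDerivAt_artanh ⟨by linarith, hs_lt_one⟩).comp w
    (hasDerivAt_sqrt hw.1.ne'))).congr_deriv ?_
  have : 1 - w ≠ 0 := by linarith [hw.2]
  simp only [Function.comp_apply, hsq]
  field_simp

theorem strictConvexOn_sqrt_mul_artanh_sqrt :
    StrictConvexOn ℝ (Ico 0 1) (fun w => √w * artanh √w) := by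
  refine StrictMonoOn.strictConvexOn_of_deriv (convex_Ico 0 1) (fun w hw => ?_) ?_
  · have hs_lt_one : √w < 1 := (sqrt_lt' one_pos).2 (by simpa using hw.2)
    exact (continuous_sqrt.continuousAt.mul ((hasDerivAt_artanh
      ⟨by linarith [sqrt_nonneg w], hs_lt_one⟩).continuousAt.comp continuous_sqrt.continuousAt))
      |>.continuousWithinAt
  · rw [interior_Ico]
    intro u hu v hv huv
    rw [(hasDerivAt_sqrt_mul_artanh_sqrt hu).deriv, (hasDerivAt_sqrt_mul_artanh_sqrt hv).deriv]
    have hsqrt (w : ℝ) (hw : w ∈ Ioo 0 1) : √w ∈ Ioo 0 1 :=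
      ⟨sqrt_pos.2 hw.1, (sqrt_lt' one_pos).2 (by simpa using hw.2)⟩
    have h₁ := strictMonoOn_artanh_div_self (hsqrt u hu) (hsqrt v hv) (sqrt_lt_sqrt hu.1.le huv)
    have h₂ : (1 - u)⁻¹ < (1 - v)⁻¹ := by gcongr; linarith [hv.2]
    simp only at h₁
    linarith

theorem sqrt_mul_artanh_sqrt_tanh_sq {x : ℝ} (hx : 0 ≤ x) :
    √(tanh x ^ 2) * artanh √(tanh x ^ 2) = x * tanh x := by
  rw [sqrt_sq (tanh_nonneg hx), artanh_tanh, mul_comm]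

/-- For fixed `x_a > 0`, the map
`x_b ↦ (x_b tanh x_b - x_a tanh x_a) / (tanh² x_b - tanh² x_a)`
is strictly increasing in `x_b` on `(x_a, ∞)`. -/
theorem tanh_difference_quotient_strictMonoOn (xa : ℝ) (hxa : 0 < xa) :
    StrictMonoOn
      (fun xb : ℝ =>
        (xb * Real.tanh xb - xa * Real.tanh xa)
          / (Real.tanh xb ^ 2 - Real.tanh xa ^ 2))
      (Set.Ioi xa) := by
  intro b hb c hc hbc
  have hb₀ : 0 ≤ b := (hxa.trans hb).le
  have hc₀ : 0 ≤ c := (hxa.trans hc).le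
  have htanh_sq {x y : ℝ} (hx : 0 ≤ x) (hxy : x < y) : tanh x ^ 2 < tanh y ^ 2 :=
    pow_lt_pow_left₀ (tanh_strictMono hxy) (tanh_nonneg hx) two_ne_zero
  have hmem (x : ℝ) : tanh x ^ 2 ∈ Ico 0 1 := ⟨sq_nonneg _, tanh_sq_lt_one x⟩
  have key := strictConvexOn_sqrt_mul_artanh_sqrt.secant_strict_mono (hmem xa) (hmem b) (hmem c)
    (htanh_sq hxa.le hb).ne' (htanh_sq hxa.le hc).ne' (htanh_sq hb₀ hbc)
  simpa only [sqrt_mul_artanh_sqrt_tanh_sq hxa.le, sqrt_mul_artanh_sqrt_tanh_sq hb₀,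
    sqrt_mul_artanh_sqrt_tanh_sq hc₀] using key
end
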